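/- Let f ∈ ℚ̄[x_1,…,x_n] be a polynomial with real algebraic coefficients, let C ⊆ ℝ^n be a compact semi-arithmetic set on which f is non-negative, let s_0 be a positive integer, and let l be a non-negative integer. Then the number ∫_C f(x)^{s_0} (log f(x))^l dμ(x) (Lebesgue measure, integrand interpreted as 0 where f vanishes) is a period. -/

import Mathlib

open MeasureTheory

noncomputable section

/-- A subset of `ℝ^m` is *semi-arithmetic* if it is a finite union of finite intersections
of sets of the form `{x | f x > 0}` or `{x | f x = 0}`, where the `f` are polynomials in
`m` variables with real algebraic coefficients. -/
def IsSemiArithmetic {m : ℕ} (C : Set (Fin m → ℝ)) : Prop :=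
  ∃ (k : ℕ) (l : Fin k → ℕ) (p : (i : Fin k) → Fin (l i) → MvPolynomial (Fin m) ℝ)
    (b : (i : Fin k) → Fin (l i) → Bool),
    (∀ i j d, IsAlgebraic ℚ ((p i j).coeff d)) ∧
    C = ⋃ i, ⋂ j,
      (if b i j then {x | MvPolynomial.eval x (p i j) = 0}
       else {x | 0 < MvPolynomial.eval x (p i j)})

/-- A real number is a (real) period if it is the value of an absolutely convergent Lebesgue
integral of a rational function with real algebraic coefficients over a semi-arithmetic set. -/
def IsRealPeriod (x : ℝ) : Prop :=
  ∃ (m : ℕ) (C : Set (Fin m → ℝ)) (p q : MvPolynomial (Fin m) ℝ),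
    IsSemiArithmetic C ∧
    (∀ d, IsAlgebraic ℚ (p.coeff d)) ∧ (∀ d, IsAlgebraic ℚ (q.coeff d)) ∧
    IntegrableOn (fun y => MvPolynomial.eval y p / MvPolynomial.eval y q) C volume ∧
    x = ∫ y in C, MvPolynomial.eval y p / MvPolynomial.eval y q

/-- A complex number is a period if its real and imaginary parts are periods. -/
def IsPeriod (z : ℂ) : Prop := IsRealPeriod z.re ∧ IsRealPeriod z.im

/-!
For `y > 0` one has `log y = ∫₀¹ (y - 1) / ((y - 1) t + 1) dt`, so `f ^ s₀ (log f) ^ l` is the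
integral over `t ∈ (0,1)^l` of the rational function `f ^ s₀ ∏ᵢ (f - 1) / ((f - 1) tᵢ + 1)`, and by
Fubini the integral over `C` is the integral of a rational function with algebraic coefficients
over the semi-arithmetic set `C × (0,1)^l`. Absolute convergence comes from the same computation
with absolute values, `∫₀¹ |(y - 1) / ((y - 1) t + 1)| dt = |log y|`, and from
`y ^ s₀ |log y| ^ l ≤ l! (y ^ (s₀ + 1) + y ^ (s₀ - 1))`, bounded on the compact set `C` since
`s₀ ≥ 1`. The same factor `f ^ s₀` makes the integrand vanish where `f = 0`, matching the
convention of the statement there.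
-/

open Set

-- The image of the polynomials over the real algebraic numbers, so that closure under the ring
-- operations comes for free.
abbrev algebraicCoeffPolys (σ : Type*) : Subring (MvPolynomial σ ℝ) :=
  (MvPolynomial.map (algebraMap (integralClosure ℚ ℝ) ℝ)).range

theorem mem_algebraicCoeffPolys_iff {σ : Type*} {p : MvPolynomial σ ℝ} :
    p ∈ algebraicCoeffPolys σ ↔ ∀ d, IsAlgebraic ℚ (p.coeff d) := by
  rw [RingHom.mem_range, ← mem_range, MvPolynomial.mem_range_map_iff_coeffs_subset]
  change _ ⊆ range ((↑) : integralClosure ℚ ℝ → ℝ) ↔ _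
  rw [Subtype.range_coe]
  change _ ⊆ ((integralClosure ℚ ℝ).toSubmodule : Set ℝ) ↔ _
  simp_rw [← MvPolynomial.mem_coeffsIn_iff_coeffs_subset, MvPolynomial.mem_coeffsIn,
    Subalgebra.mem_toSubmodule, mem_integralClosure_iff, isAlgebraic_iff_isIntegral]

theorem X_mem_algebraicCoeffPolys {σ : Type*} (i : σ) :
    MvPolynomial.X i ∈ algebraicCoeffPolys σ :=
  ⟨MvPolynomial.X i, MvPolynomial.map_X _ _⟩

theorem rename_mem_algebraicCoeffPolys {σ τ : Type*} (g : σ → τ) {p : MvPolynomial σ ℝ}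
    (hp : p ∈ algebraicCoeffPolys σ) : MvPolynomial.rename g p ∈ algebraicCoeffPolys τ := by
  obtain ⟨p, rfl⟩ := hp
  exact ⟨MvPolynomial.rename g p, MvPolynomial.map_rename _ _ _⟩

theorem isSemiArithmetic_iff {m : ℕ} {C : Set (Fin m → ℝ)} :
    IsSemiArithmetic C ↔ ∃ (k : ℕ) (l : Fin k → ℕ)
      (p : (i : Fin k) → Fin (l i) → MvPolynomial (Fin m) ℝ) (b : (i : Fin k) → Fin (l i) → Bool),
      (∀ i j, p i j ∈ algebraicCoeffPolys (Fin m)) ∧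
      C = ⋃ i, ⋂ j, (if b i j then {x | MvPolynomial.eval x (p i j) = 0}
        else {x | 0 < MvPolynomial.eval x (p i j)}) := by
  simp only [mem_algebraicCoeffPolys_iff]; rfl

theorem IsSemiArithmetic.preimage_comp {m m' : ℕ} {C : Set (Fin m → ℝ)} (hC : IsSemiArithmetic C)
    (g : Fin m → Fin m') : IsSemiArithmetic ((· ∘ g) ⁻¹' C) := by
  obtain ⟨k, l, p, b, hp, rfl⟩ := isSemiArithmetic_iff.1 hC
  refine isSemiArithmetic_iff.2 ⟨k, l, fun i j => MvPolynomial.rename g (p i j), b,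
    fun i j => rename_mem_algebraicCoeffPolys g (hp i j), ?_⟩
  ext z
  simp only [preimage_iUnion, preimage_iInter, mem_iUnion, mem_iInter,
    MvPolynomial.eval_rename]
  refine exists_congr fun i => forall_congr' fun j => ?_
  split_ifs <;> rfl

theorem IsSemiArithmetic.inter_iInter_pos {m r : ℕ} {C : Set (Fin m → ℝ)}
    (hC : IsSemiArithmetic C) (q : Fin r → MvPolynomial (Fin m) ℝ)
    (hq : ∀ j, q j ∈ algebraicCoeffPolys (Fin m)) :
    IsSemiArithmetic (C ∩ ⋂ j, {x | 0 < MvPolynomial.eval x (q j)}) := by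
  obtain ⟨k, l, p, b, hp, rfl⟩ := isSemiArithmetic_iff.1 hC
  refine isSemiArithmetic_iff.2 ⟨k, fun i => l i + r, fun i => Fin.append (p i) q,
    fun i => Fin.append (b i) fun _ => false, fun i => Fin.addCases (by simpa using hp i)
      (by simpa using hq), ?_⟩
  ext z
  simp [iUnion_inter, Fin.forall_fin_add]

theorem IsSemiArithmetic.prod_Ioo_cube {n : ℕ} {C : Set (Fin n → ℝ)} (hC : IsSemiArithmetic C)
    (l : ℕ) : IsSemiArithmetic {z : Fin (n + l) → ℝ |
      (fun i => z (Fin.castAdd l i)) ∈ C ∧ ∀ i, z (Fin.natAdd n i) ∈ Ioo 0 1} := by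
  have ht (i : Fin l) := X_mem_algebraicCoeffPolys (Fin.natAdd n i)
  convert ((hC.preimage_comp (Fin.castAdd l)).inter_iInter_pos _ ht).inter_iInter_pos _
    fun i => sub_mem (one_mem _) (ht i) using 1
  ext z
  simp [mem_iInter, forall_and, and_assoc, Function.comp_def]

theorem isRealPeriod_zero : IsRealPeriod 0 :=
  ⟨0, ∅, 0, 0, ⟨0, Fin.elim0, fun i => i.elim0, fun i => i.elim0, fun i => i.elim0,
    (iUnion_of_empty _).symm⟩, fun _ => isAlgebraic_zero, fun _ => isAlgebraic_zero,
    integrableOn_empty, setIntegral_empty.symm⟩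

theorem IsRealPeriod.of_measurePreserving {X : Type*} [MeasurableSpace X] {μ : Measure X} {m : ℕ}
    {e : X ≃ᵐ (Fin m → ℝ)} (he : MeasurePreserving e μ volume) {S : Set (Fin m → ℝ)}
    (hS : IsSemiArithmetic S) {p q : MvPolynomial (Fin m) ℝ}
    (hp : p ∈ algebraicCoeffPolys (Fin m)) (hq : q ∈ algebraicCoeffPolys (Fin m))
    (hint : IntegrableOn (fun w => MvPolynomial.eval (e w) p / MvPolynomial.eval (e w) q)
      (e ⁻¹' S) μ) :
    IsRealPeriod (∫ w in e ⁻¹' S, MvPolynomial.eval (e w) p / MvPolynomial.eval (e w) q ∂μ) := by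
  refine ⟨m, S, p, q, hS, mem_algebraicCoeffPolys_iff.1 hp, mem_algebraicCoeffPolys_iff.1 hq,
    ?_, he.setIntegral_preimage_emb e.measurableEmbedding
      (fun y => MvPolynomial.eval y p / MvPolynomial.eval y q) S⟩
  rwa [IntegrableOn, ← (he.restrict_preimage_emb e.measurableEmbedding S).integrable_comp_emb
    e.measurableEmbedding]

def MeasurableEquiv.finAppend (α : Type*) [MeasurableSpace α] (m n : ℕ) :
    (Fin m → α) × (Fin n → α) ≃ᵐ (Fin (m + n) → α) :=
  (MeasurableEquiv.sumPiEquivProdPi fun _ : Fin m ⊕ Fin n => α).symm.trans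
    (MeasurableEquiv.piCongrLeft (fun _ => α) finSumFinEquiv)

theorem MeasurableEquiv.finAppend_apply {α : Type*} [MeasurableSpace α] {m n : ℕ}
    (w : (Fin m → α) × (Fin n → α)) : MeasurableEquiv.finAppend α m n w = Fin.append w.1 w.2 := by
  funext i
  obtain ⟨s, rfl⟩ := finSumFinEquiv.surjective i
  rw [MeasurableEquiv.finAppend, MeasurableEquiv.trans_apply,
    MeasurableEquiv.piCongrLeft_apply_apply]
  rcases s with i | i
  · simp only [finSumFinEquiv_apply_left, Fin.append_left]; rfl
  · simp only [finSumFinEquiv_apply_right, Fin.append_right]; rfl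

theorem MeasurableEquiv.measurePreserving_finAppend (α : Type*) [MeasureSpace α]
    [SigmaFinite (volume : Measure α)] (m n : ℕ) :
    MeasurePreserving (MeasurableEquiv.finAppend α m n) volume volume :=
  (volume_measurePreserving_sumPiEquivProdPi_symm _).trans
    (volume_measurePreserving_piCongrLeft _ _)

def logKernel (y t : ℝ) : ℝ := (y - 1) / ((y - 1) * t + 1)

theorem sub_one_mul_add_one_pos {y t : ℝ} (hy : 0 < y) (ht : t ∈ Icc (0 : ℝ) 1) :
    0 < (y - 1) * t + 1 := by
  rcases ht.2.lt_or_eq with ht1 | rfl <;> nlinarith [mul_nonneg hy.le ht.1]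

theorem continuousOn_logKernel {y : ℝ} (hy : 0 < y) : ContinuousOn (logKernel y) (Icc 0 1) :=
  continuousOn_const.div (by fun_prop) fun _ ht => (sub_one_mul_add_one_pos hy ht).ne'

theorem integrableOn_logKernel {y : ℝ} (hy : 0 < y) : IntegrableOn (logKernel y) (Ioo 0 1) :=
  ((continuousOn_logKernel hy).integrableOn_compact isCompact_Icc).mono_set Ioo_subset_Icc_self

theorem integral_logKernel {y : ℝ} (hy : 0 < y) : ∫ t in Ioo 0 1, logKernel y t = Real.log y := by
  have hderiv : ∀ t ∈ uIcc (0 : ℝ) 1,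
      HasDerivAt (fun u => Real.log ((y - 1) * u + 1)) (logKernel y t) t := by
    intro t ht
    rw [uIcc_of_le zero_le_one] at ht
    have := ((hasDerivAt_id t).const_mul (y - 1)).add_const 1
    simpa [logKernel, div_eq_inv_mul] using this.log (sub_one_mul_add_one_pos hy ht).ne'
  have hint : IntervalIntegrable (logKernel y) volume 0 1 :=
    (continuousOn_logKernel hy).intervalIntegrable_of_Icc zero_le_one
  rw [← integral_Ioc_eq_integral_Ioo, ← intervalIntegral.integral_of_le zero_le_one,
    intervalIntegral.integral_eq_sub_of_hasDerivAt hderiv hint]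
  simp

theorem integral_abs_logKernel {y : ℝ} (hy : 0 < y) :
    ∫ t in Ioo 0 1, |logKernel y t| = |Real.log y| := by
  have hden : ∀ t ∈ Ioo (0 : ℝ) 1, 0 < (y - 1) * t + 1 := fun t ht =>
    sub_one_mul_add_one_pos hy (Ioo_subset_Icc_self ht)
  rcases le_total 1 y with h | h
  · have habs : EqOn (fun t => |logKernel y t|) (logKernel y) (Ioo 0 1) := fun t ht =>
      abs_of_nonneg (div_nonneg (sub_nonneg.2 h) (hden t ht).le)
    rw [setIntegral_congr_fun measurableSet_Ioo habs, integral_logKernel hy,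
      abs_of_nonneg (Real.log_nonneg h)]
  · have habs : EqOn (fun t => |logKernel y t|) (fun t => -logKernel y t) (Ioo 0 1) :=
      fun t ht => abs_of_nonpos (div_nonpos_of_nonpos_of_nonneg (sub_nonpos.2 h) (hden t ht).le)
    rw [setIntegral_congr_fun measurableSet_Ioo habs, integral_neg, integral_logKernel hy,
      abs_of_nonpos (Real.log_nonpos hy.le h)]

section Cube

variable {ι : Type*} [Fintype ι]

theorem setIntegral_univ_pi_prod_eq_pow {E 𝕜 : Type*} [RCLike 𝕜] [MeasureSpace E]
    [SigmaFinite (volume : Measure E)] (s : Set E) (h : E → 𝕜) :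
    ∫ t in univ.pi (fun _ : ι => s), ∏ i, h (t i) = (∫ u in s, h u) ^ Fintype.card ι := by
  rw [volume_pi, Measure.restrict_pi_pi, integral_fintype_prod_eq_pow]

theorem integrableOn_univ_pi_prod {E 𝕜 : Type*} [RCLike 𝕜] [MeasureSpace E]
    [SigmaFinite (volume : Measure E)] {s : Set E} {h : E → 𝕜} (hh : IntegrableOn h s) :
    IntegrableOn (fun t : ι → E => ∏ i, h (t i)) (univ.pi fun _ => s) := by
  rw [IntegrableOn, volume_pi, Measure.restrict_pi_pi]
  exact Integrable.fintype_prod fun _ => hh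

variable {s : ℕ} {y : ℝ}

theorem integrableOn_pow_mul_prod_logKernel (hs : s ≠ 0) (hy : 0 ≤ y) :
    IntegrableOn (fun t : ι → ℝ => y ^ s * ∏ i, logKernel y (t i)) (univ.pi fun _ => Ioo 0 1) := by
  rcases hy.eq_or_lt with rfl | hy
  · simp [zero_pow hs]
  · exact (integrableOn_univ_pi_prod (integrableOn_logKernel hy)).const_mul _

theorem setIntegral_pow_mul_prod_logKernel (hs : s ≠ 0) (hy : 0 ≤ y) :
    ∫ t in univ.pi (fun _ : ι => Ioo 0 1), y ^ s * ∏ i, logKernel y (t i)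
      = y ^ s * Real.log y ^ Fintype.card ι := by
  rcases hy.eq_or_lt with rfl | hy
  · simp [zero_pow hs]
  · rw [integral_const_mul, setIntegral_univ_pi_prod_eq_pow, integral_logKernel hy]

theorem setIntegral_norm_pow_mul_prod_logKernel (hs : s ≠ 0) (hy : 0 ≤ y) :
    ∫ t in univ.pi (fun _ : ι => Ioo 0 1), ‖y ^ s * ∏ i, logKernel y (t i)‖
      = y ^ s * |Real.log y| ^ Fintype.card ι := by
  simp_rw [norm_mul, norm_pow, norm_prod, Real.norm_eq_abs, abs_of_nonneg hy]
  rcases hy.eq_or_lt with rfl | hy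
  · simp [zero_pow hs]
  · rw [integral_const_mul, setIntegral_univ_pi_prod_eq_pow (h := fun u => |logKernel y u|),
      integral_abs_logKernel hy]

end Cube

theorem pow_mul_abs_log_pow_le {s : ℕ} (hs : s ≠ 0) {y : ℝ} (hy : 0 ≤ y) (l : ℕ) :
    y ^ s * |Real.log y| ^ l ≤ l.factorial * (y ^ (s + 1) + y ^ (s - 1)) := by
  rcases hy.eq_or_lt with rfl | hy
  · rw [zero_pow hs, zero_mul]; positivity
  have hexp : |Real.log y| ^ l ≤ l.factorial * (y + y⁻¹) := by
    have hpow := Real.pow_div_factorial_le_exp |Real.log y| (abs_nonneg _) l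
    have habs := Real.exp_abs_le (Real.log y)
    rw [Real.exp_log hy, Real.exp_neg, Real.exp_log hy] at habs
    rw [div_le_iff₀ (by positivity), mul_comm] at hpow
    exact hpow.trans (by gcongr)
  obtain ⟨k, rfl⟩ := Nat.exists_eq_succ_of_ne_zero hs
  calc y ^ (k + 1) * |Real.log y| ^ l ≤ y ^ (k + 1) * (l.factorial * (y + y⁻¹)) := by gcongr
    _ = l.factorial * (y ^ (k + 1 + 1) + y ^ (k + 1 - 1)) := by
      rw [Nat.add_sub_cancel]; field_simp; ring

section Fubini

variable {X : Type*} [TopologicalSpace X] [T2Space X] [MeasurableSpace X] [OpensMeasurableSpace X]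
  {μ : Measure X} [SFinite μ] [IsFiniteMeasureOnCompacts μ] {C : Set X} {g : X → ℝ}
  (ι : Type*) [Fintype ι] {s : ℕ}

theorem integrableOn_prod_pow_mul_prod_logKernel (hC : IsCompact C) (hg : Continuous g)
    (hg0 : ∀ x ∈ C, 0 ≤ g x) (hs : s ≠ 0) :
    IntegrableOn (fun w : X × (ι → ℝ) => g w.1 ^ s * ∏ i, logKernel (g w.1) (w.2 i))
      (C ×ˢ univ.pi fun _ => Ioo 0 1) (μ.prod volume) := by
  have hmeas : Measurable fun w : X × (ι → ℝ) => g w.1 ^ s * ∏ i, logKernel (g w.1) (w.2 i) := by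
    have := hg.measurable
    unfold logKernel
    fun_prop
  rw [IntegrableOn, ← Measure.prod_restrict, integrable_prod_iff hmeas.aestronglyMeasurable]
  refine ⟨?_, ?_⟩
  · filter_upwards [ae_restrict_mem hC.measurableSet] with x hx
    exact integrableOn_pow_mul_prod_logKernel (ι := ι) hs (hg0 x hx)
  · have hbound : IntegrableOn
        (fun x => (Fintype.card ι).factorial * (g x ^ (s + 1) + g x ^ (s - 1))) C μ :=
      (by fun_prop : Continuous _).continuousOn.integrableOn_compact hC
    refine hbound.mono' hmeas.aestronglyMeasurable.norm.integral_prod_right' ?_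
    filter_upwards [ae_restrict_mem hC.measurableSet] with x hx
    rw [Real.norm_eq_abs, abs_of_nonneg (integral_nonneg fun _ => norm_nonneg _),
      setIntegral_norm_pow_mul_prod_logKernel hs (hg0 x hx)]
    exact pow_mul_abs_log_pow_le hs (hg0 x hx) _

theorem setIntegral_prod_pow_mul_prod_logKernel (hC : IsCompact C) (hg : Continuous g)
    (hg0 : ∀ x ∈ C, 0 ≤ g x) (hs : s ≠ 0) :
    ∫ w in C ×ˢ univ.pi (fun _ => Ioo 0 1), g w.1 ^ s * ∏ i : ι, logKernel (g w.1) (w.2 i)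
        ∂(μ.prod volume)
      = ∫ x in C, g x ^ s * Real.log (g x) ^ Fintype.card ι ∂μ := by
  have hint := integrableOn_prod_pow_mul_prod_logKernel (μ := μ) ι hC hg hg0 hs
  rw [IntegrableOn, ← Measure.prod_restrict] at hint
  rw [← Measure.prod_restrict, integral_prod _ hint]
  refine setIntegral_congr_fun hC.measurableSet fun x hx => ?_
  exact setIntegral_pow_mul_prod_logKernel hs (hg0 x hx)

end Fubini

section Polynomials

variable {n : ℕ}

def logKernelNumerator (f : MvPolynomial (Fin n) ℝ) (s l : ℕ) : MvPolynomial (Fin (n + l)) ℝ :=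
  MvPolynomial.rename (Fin.castAdd l) f ^ s * (MvPolynomial.rename (Fin.castAdd l) f - 1) ^ l

def logKernelDenominator (f : MvPolynomial (Fin n) ℝ) (l : ℕ) : MvPolynomial (Fin (n + l)) ℝ :=
  ∏ i : Fin l, ((MvPolynomial.rename (Fin.castAdd l) f - 1) * MvPolynomial.X (Fin.natAdd n i) + 1)

theorem eval_logKernelNumerator_div_eval_logKernelDenominator (f : MvPolynomial (Fin n) ℝ)
    (s : ℕ) {l : ℕ} (w : (Fin n → ℝ) × (Fin l → ℝ)) :
    MvPolynomial.eval (MeasurableEquiv.finAppend ℝ n l w) (logKernelNumerator f s l) /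
        MvPolynomial.eval (MeasurableEquiv.finAppend ℝ n l w) (logKernelDenominator f l)
      = MvPolynomial.eval w.1 f ^ s * ∏ i, logKernel (MvPolynomial.eval w.1 f) (w.2 i) := by
  simp [MeasurableEquiv.finAppend_apply, logKernelNumerator, logKernelDenominator, logKernel,
    MvPolynomial.eval_rename, Function.comp_def, Finset.prod_div_distrib, mul_div_assoc]

variable {f : MvPolynomial (Fin n) ℝ}

theorem logKernelNumerator_mem (hf : f ∈ algebraicCoeffPolys (Fin n)) (s l : ℕ) :
    logKernelNumerator f s l ∈ algebraicCoeffPolys (Fin (n + l)) :=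
  have := rename_mem_algebraicCoeffPolys (Fin.castAdd l) hf
  mul_mem (pow_mem this s) (pow_mem (sub_mem this (one_mem _)) l)

theorem logKernelDenominator_mem (hf : f ∈ algebraicCoeffPolys (Fin n)) (l : ℕ) :
    logKernelDenominator f l ∈ algebraicCoeffPolys (Fin (n + l)) :=
  prod_mem fun i _ => add_mem (mul_mem (sub_mem (rename_mem_algebraicCoeffPolys _ hf)
    (one_mem _)) (X_mem_algebraicCoeffPolys (Fin.natAdd n i))) (one_mem _)

end Polynomials

/-- For a polynomial `f` with real algebraic coefficients, non-negative on a compact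
semi-arithmetic set `C`, a positive integer `s₀` and a non-negative integer `l`, the number
`∫_C f^{s₀} (log f)^l dμ` is a period. -/
theorem integral_power_log_is_period
    (n : ℕ) (f : MvPolynomial (Fin n) ℝ)
    (halg : ∀ d, IsAlgebraic ℚ (f.coeff d))
    (C : Set (Fin n → ℝ)) (hCsa : IsSemiArithmetic C) (hCcomp : IsCompact C)
    (hnonneg : ∀ x ∈ C, 0 ≤ MvPolynomial.eval x f)
    (s₀ : ℕ) (hs₀ : 0 < s₀) (l : ℕ) :
    IsPeriod ((∫ x in C,
      if MvPolynomial.eval x f = 0 then (0 : ℝ)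
      else (MvPolynomial.eval x f) ^ s₀ * (Real.log (MvPolynomial.eval x f)) ^ l : ℝ) : ℂ) := by
  have hf : Continuous fun x => MvPolynomial.eval x f := MvPolynomial.continuous_eval f
  have hfa : f ∈ algebraicCoeffPolys (Fin n) := mem_algebraicCoeffPolys_iff.2 halg
  have hpre : MeasurableEquiv.finAppend ℝ n l ⁻¹' {z | (fun i => z (Fin.castAdd l i)) ∈ C ∧
      ∀ i, z (Fin.natAdd n i) ∈ Ioo 0 1} = C ×ˢ univ.pi fun _ => Ioo 0 1 := by
    ext; simp [MeasurableEquiv.finAppend_apply]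
  have hint := integrableOn_prod_pow_mul_prod_logKernel (μ := volume) (Fin l) hCcomp hf hnonneg
    hs₀.ne'
  have hper := IsRealPeriod.of_measurePreserving (MeasurableEquiv.measurePreserving_finAppend ℝ n l)
    (hCsa.prod_Ioo_cube l) (logKernelNumerator_mem hfa s₀ l) (logKernelDenominator_mem hfa l)
    (by rw [hpre, Measure.volume_eq_prod]
        simpa only [eval_logKernelNumerator_div_eval_logKernelDenominator] using hint)
  simp only [eval_logKernelNumerator_div_eval_logKernelDenominator] at hper
  rw [hpre, Measure.volume_eq_prod,
    setIntegral_prod_pow_mul_prod_logKernel (Fin l) hCcomp hf hnonneg hs₀.ne', Fintype.card_fin]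
    at hper
  have hite (y : ℝ) : (if y = 0 then 0 else y ^ s₀ * Real.log y ^ l) = y ^ s₀ * Real.log y ^ l := by
    split_ifs with h <;> simp [h, hs₀.ne']
  simp_rw [hite]
  exact ⟨by simpa using hper, by simpa using isRealPeriod_zero⟩
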